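/- Let ψ : ℝⁿ ⇉ ℝⁿ satisfy the (Γ₁)-condition and V : ℝⁿ → ℝⁿ be L-Lipschitz continuous and η-strongly monotone. Let μ > 0 and ρ > 0 satisfy ‖P_{ψ(r)}(y) − P_{ψ(s)}(y)‖ ≤ ρ‖r − s‖ for all y, r, s ∈ ℝⁿ, assume θ := η − ρ − 1/2 − L²/2 − μ²/2 + μη > 0 and √(L² − 2ημ + μ²) + ρ < μ, and set θ₁ := θ/(2L + ρ + μ)². Let σ, τ : [0, ∞) → (0, ∞) be given functions, let x* be the unique solution of the inverse quasi-variational inequality problem, and let x : [0, ∞) → ℝⁿ be twice differentiable and satisfy ẍ(t) + σ(t)ẋ(t) + τ(t)(V(x(t)) − P_{ψ(x(t))}(V(x(t)) − μx(t))) = 0 for all t ≥ 0. Then the function k(t) := (1/2)‖x(t) − x*‖² satisfies, for every t ≥ 0, k̈(t) + σ(t)k̇(t) + θ²θ₁τ(t) k(t) + (θ₁σ²(t)/(2τ(t)) − 1)‖ẋ(t)‖² + (θ₁σ(t)/(2τ(t))) · (d/dt)‖ẋ(t)‖² ≤ 0. -/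

import Mathlib

/-
With `F x := V x - P_{ψ x}(V x - μ x)` the dynamics read `ẍ + σ ẋ + τ F(x) = 0`, and `F x* = 0`.
Splitting `P_{ψ x}(V x - μ x) - V x*` through `P_{ψ x}(V x* - μ x*)` and using nonexpansiveness of
the projection together with the `ρ`-Lipschitz dependence on the set gives, for `e := x - x*`,
`⟪F x, e⟫ ≥ θ ‖e‖²` and `‖F x‖ ≤ (2L + ρ + μ) ‖e‖`, hence `θ₁ ‖F x‖² ≤ θ ‖e‖²`.
Substituting `ẍ` into `k̈ = ‖ẋ‖² + ⟪e, ẍ⟫` and `(d/dt)‖ẋ‖² = 2⟪ẋ, ẍ⟫`, the left-hand side becomes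
`-τ⟪F, e⟫ + θ²θ₁τ‖e‖²/2 - θ₁σ²‖ẋ‖²/(2τ) - θ₁σ⟪F, ẋ⟫`. The cross term is absorbed by
`2στ‖F‖‖ẋ‖ ≤ σ²‖ẋ‖² + τ²‖F‖²`, and `θ‖e‖ ≤ ‖F‖` (from `⟪F, e⟫ ≥ θ‖e‖²`) bounds the `θ²θ₁` term.
-/

open scoped RealInnerProductSpace
open Set

/- Metric projection onto a set `C ⊆ ℝⁿ`: when `C` is nonempty, closed and convex this is
the unique nearest point of `C`. -/
open Classical in
noncomputable def metricProj {d : ℕ} (C : Set (EuclideanSpace ℝ (Fin d)))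
    (x : EuclideanSpace ℝ (Fin d)) : EuclideanSpace ℝ (Fin d) :=
  if h : ∃ y, y ∈ C ∧ ∀ z ∈ C, ‖x - y‖ ≤ ‖x - z‖ then h.choose else x

section InnerProductSpace

variable {E : Type*} [NormedAddCommGroup E] [InnerProductSpace ℝ E]

theorem norm_sub_le_of_forall_inner_le_zero {C : Set E} {u w p q : E} (hp : p ∈ C) (hq : q ∈ C)
    (hpC : ∀ z ∈ C, ⟪u - p, z - p⟫ ≤ 0) (hqC : ∀ z ∈ C, ⟪w - q, z - q⟫ ≤ 0) :
    ‖p - q‖ ≤ ‖u - w‖ := by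
  have hexpand : ‖p - q‖ ^ 2 - ⟪u - w, p - q⟫ = ⟪u - p, q - p⟫ + ⟪w - q, p - q⟫ := by
    rw [← real_inner_self_eq_norm_sq]
    simp only [inner_sub_left, inner_sub_right]
    ring
  have hsq : ‖p - q‖ ^ 2 ≤ ‖u - w‖ * ‖p - q‖ := by
    linarith [hpC q hq, hqC p hp, real_inner_le_norm (u - w) (p - q)]
  nlinarith [norm_nonneg (p - q), norm_nonneg (u - w)]

theorem norm_sub_smul_sq_le {a b : E} {L η μ : ℝ} (hμ : 0 ≤ μ) (hL : ‖a‖ ≤ L * ‖b‖)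
    (hη : η * ‖b‖ ^ 2 ≤ ⟪a, b⟫) :
    ‖a - μ • b‖ ^ 2 ≤ (L ^ 2 - 2 * η * μ + μ ^ 2) * ‖b‖ ^ 2 := by
  have hLsq : ‖a‖ ^ 2 ≤ L ^ 2 * ‖b‖ ^ 2 := by
    nlinarith [norm_nonneg a, norm_nonneg b]
  rw [norm_sub_sq_real, inner_smul_right, norm_smul, Real.norm_of_nonneg hμ]
  nlinarith [mul_le_mul_of_nonneg_left hη hμ]

theorem mul_norm_le_norm_of_mul_norm_sq_le_inner {F e : E} {θ : ℝ} (h : θ * ‖e‖ ^ 2 ≤ ⟪F, e⟫) :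
    θ * ‖e‖ ≤ ‖F‖ := by
  rcases (norm_nonneg e).eq_or_lt with he | he
  · rw [← he, mul_zero]
    exact norm_nonneg F
  · have : θ * ‖e‖ * ‖e‖ ≤ ‖F‖ * ‖e‖ := by
      linarith [real_inner_le_norm F e]
    exact le_of_mul_le_mul_right this he

theorem HasDerivAt.unique_of_eqOn_Ici {f g : ℝ → E} {a b : E} {t : ℝ} (hf : HasDerivAt f a t)
    (hg : HasDerivAt g b t) (hfg : EqOn f g (Ici t)) : a = b :=
  (uniqueDiffOn_Ici t t self_mem_Ici).eq_deriv _ hf.hasDerivWithinAt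
    (hg.hasDerivWithinAt.congr hfg (hfg self_mem_Ici))

theorem deriv_half_norm_sub_sq_eq {x : ℝ → E} {c v : E} {k : ℝ → ℝ} {k' t : ℝ}
    (hk : ∀ s, k s = 1 / 2 * ‖x s - c‖ ^ 2) (hx : HasDerivAt x v t) (hk' : HasDerivAt k k' t) :
    k' = ⟪x t - c, v⟫ := by
  have h := ((hx.sub_const c).norm_sq).const_mul (1 / 2 : ℝ)
  rw [← funext hk] at h
  rw [hk'.unique h]
  ring

theorem second_deriv_half_norm_sub_sq_eq {x x' : ℝ → E} {c a : E} {k k' : ℝ → ℝ} {k'' t₀ t : ℝ}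
    (hk : ∀ s, k s = 1 / 2 * ‖x s - c‖ ^ 2) (hx : ∀ s, t₀ ≤ s → HasDerivAt x (x' s) s)
    (hk' : ∀ s, t₀ ≤ s → HasDerivAt k (k' s) s) (hx' : HasDerivAt x' a t)
    (hk'' : HasDerivAt k' k'' t) (ht : t₀ ≤ t) :
    k'' = ‖x' t‖ ^ 2 + ⟪x t - c, a⟫ := by
  have hg := ((hx t ht).sub_const c).inner ℝ hx'
  rw [hk''.unique_of_eqOn_Ici hg fun s hs =>
    deriv_half_norm_sub_sq_eq hk (hx s (ht.trans hs)) (hk' s (ht.trans hs)),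
    real_inner_self_eq_norm_sq]
  ring

/-- The inequality at one instant: `e = x - x*`, `v = ẋ`, `acc = ẍ`, so `k̇ = ⟪e, v⟫`,
`k̈ = ‖v‖² + ⟪e, acc⟫` and `(d/dt)‖ẋ‖² = 2⟪v, acc⟫`. -/
theorem lyapunov_bound {e v acc F : E} {σ τ θ θ₁ : ℝ} (hacc : acc + σ • v + τ • F = 0)
    (hσ : 0 ≤ σ) (hτ : 0 < τ) (hθ : 0 ≤ θ) (hθ₁ : 0 ≤ θ₁) (hFe : θ * ‖e‖ ^ 2 ≤ ⟪F, e⟫)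
    (hF : θ₁ * ‖F‖ ^ 2 ≤ θ * ‖e‖ ^ 2) :
    (‖v‖ ^ 2 + ⟪e, acc⟫) + σ * ⟪e, v⟫ + θ ^ 2 * θ₁ * τ * (1 / 2 * ‖e‖ ^ 2)
      + (θ₁ * σ ^ 2 / (2 * τ) - 1) * ‖v‖ ^ 2 + θ₁ * σ / (2 * τ) * (2 * ⟪v, acc⟫) ≤ 0 := by
  have hacc' : acc = -(σ • v) - τ • F := by
    rw [← sub_eq_zero, ← hacc]
    module
  have hvv : ⟪v, v⟫ = ‖v‖ ^ 2 := real_inner_self_eq_norm_sq v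
  rw [hacc']
  simp only [inner_sub_right, inner_neg_right, inner_smul_right, hvv, real_inner_comm F e]
  have hθe : θ ^ 2 * ‖e‖ ^ 2 ≤ ‖F‖ ^ 2 := by
    rw [← mul_pow]
    exact pow_le_pow_left₀ (by positivity) (mul_norm_le_norm_of_mul_norm_sq_le_inner hFe) 2
  have hcross : -⟪v, F⟫ ≤ ‖v‖ * ‖F‖ := by
    linarith [neg_abs_le ⟪v, F⟫, abs_real_inner_le_norm v F]
  have key : θ ^ 2 * θ₁ * τ ^ 2 * ‖e‖ ^ 2 - 2 * τ ^ 2 * ⟪F, e⟫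
      - θ₁ * σ ^ 2 * ‖v‖ ^ 2 - 2 * θ₁ * σ * τ * ⟪v, F⟫ ≤ 0 := by
    nlinarith [mul_le_mul_of_nonneg_left hFe (sq_nonneg τ),
      mul_le_mul_of_nonneg_left hθe (mul_nonneg hθ₁ (sq_nonneg τ)),
      mul_le_mul_of_nonneg_left hF (sq_nonneg τ),
      mul_le_mul_of_nonneg_left hcross (mul_nonneg (mul_nonneg hθ₁ hσ) hτ.le),
      mul_nonneg hθ₁ (sq_nonneg (σ * ‖v‖ - τ * ‖F‖))]
  have hexpr : ‖v‖ ^ 2 + (-(σ * ⟪e, v⟫) - τ * ⟪F, e⟫) + σ * ⟪e, v⟫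
      + θ ^ 2 * θ₁ * τ * (1 / 2 * ‖e‖ ^ 2) + (θ₁ * σ ^ 2 / (2 * τ) - 1) * ‖v‖ ^ 2
      + θ₁ * σ / (2 * τ) * (2 * (-(σ * ‖v‖ ^ 2) - τ * ⟪v, F⟫))
      = (θ ^ 2 * θ₁ * τ ^ 2 * ‖e‖ ^ 2 - 2 * τ ^ 2 * ⟪F, e⟫
        - θ₁ * σ ^ 2 * ‖v‖ ^ 2 - 2 * θ₁ * σ * τ * ⟪v, F⟫) / (2 * τ) := by
    field_simp
    ring
  rw [hexpr]
  exact div_nonpos_of_nonpos_of_nonneg key (by positivity)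

end InnerProductSpace

theorem div_sq_mul_sq_le {θ K N c : ℝ} (hθ : 0 ≤ θ) (hN : 0 ≤ N) (hNc : N ≤ K * c) :
    θ / K ^ 2 * N ^ 2 ≤ θ * c ^ 2 := by
  rcases eq_or_ne K 0 with rfl | hK
  · rw [zero_pow two_ne_zero, div_zero, zero_mul]
    positivity
  · calc θ / K ^ 2 * N ^ 2 ≤ θ / K ^ 2 * (K * c) ^ 2 := by gcongr
      _ = θ * c ^ 2 := by field_simp

section MetricProjection

variable {d : ℕ}

theorem exists_forall_norm_sub_le {C : Set (EuclideanSpace ℝ (Fin d))} (hne : C.Nonempty)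
    (hcl : IsClosed C) (u : EuclideanSpace ℝ (Fin d)) :
    ∃ y, y ∈ C ∧ ∀ z ∈ C, ‖u - y‖ ≤ ‖u - z‖ := by
  obtain ⟨y, hyC, hyd⟩ := hcl.exists_infDist_eq_dist hne u
  refine ⟨y, hyC, fun z hz => ?_⟩
  rw [← dist_eq_norm, ← dist_eq_norm, ← hyd]
  exact Metric.infDist_le_dist_of_mem hz

theorem metricProj_spec {C : Set (EuclideanSpace ℝ (Fin d))} (hne : C.Nonempty)
    (hcl : IsClosed C) (hconv : Convex ℝ C) (u : EuclideanSpace ℝ (Fin d)) :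
    metricProj C u ∈ C ∧ ∀ z ∈ C, ⟪u - metricProj C u, z - metricProj C u⟫ ≤ 0 := by
  have hex := exists_forall_norm_sub_le hne hcl u
  rw [metricProj, dif_pos hex]
  obtain ⟨hmem, hmin⟩ := hex.choose_spec
  refine ⟨hmem, ?_⟩
  rw [← norm_eq_iInf_iff_real_inner_le_zero hconv hmem]
  have : Nonempty C := ⟨⟨_, hmem⟩⟩
  exact le_antisymm (le_ciInf fun w => hmin w w.2)
    (ciInf_le ⟨0, fun _ ⟨w, h⟩ => h ▸ norm_nonneg _⟩ (⟨_, hmem⟩ : C))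

theorem norm_metricProj_sub_metricProj_le {C : Set (EuclideanSpace ℝ (Fin d))}
    (hne : C.Nonempty) (hcl : IsClosed C) (hconv : Convex ℝ C) (u w : EuclideanSpace ℝ (Fin d)) :
    ‖metricProj C u - metricProj C w‖ ≤ ‖u - w‖ :=
  have hu := metricProj_spec hne hcl hconv u
  have hw := metricProj_spec hne hcl hconv w
  norm_sub_le_of_forall_inner_le_zero hu.1 hw.1 hu.2 hw.2

theorem metricProj_eq_of_forall_inner_le_zero {C : Set (EuclideanSpace ℝ (Fin d))}
    (hne : C.Nonempty) (hcl : IsClosed C) (hconv : Convex ℝ C) {u p : EuclideanSpace ℝ (Fin d)}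
    (hp : p ∈ C) (hpC : ∀ z ∈ C, ⟪u - p, z - p⟫ ≤ 0) : metricProj C u = p := by
  have hu := metricProj_spec hne hcl hconv u
  have h := norm_sub_le_of_forall_inner_le_zero hu.1 hp hu.2 hpC
  rwa [sub_self, norm_zero, norm_le_zero_iff, sub_eq_zero] at h

end MetricProjection

section Residual

variable {d : ℕ} {ψ : EuclideanSpace ℝ (Fin d) → Set (EuclideanSpace ℝ (Fin d))}
  {V : EuclideanSpace ℝ (Fin d) → EuclideanSpace ℝ (Fin d)} {L η μ ρ : ℝ}
  {x xs : EuclideanSpace ℝ (Fin d)}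

def IsIQVISolution (ψ : EuclideanSpace ℝ (Fin d) → Set (EuclideanSpace ℝ (Fin d)))
    (V : EuclideanSpace ℝ (Fin d) → EuclideanSpace ℝ (Fin d)) (xs : EuclideanSpace ℝ (Fin d)) :
    Prop :=
  V xs ∈ ψ xs ∧ ∀ z ∈ ψ xs, 0 ≤ ⟪xs, z - V xs⟫

noncomputable def iqviResidual (ψ : EuclideanSpace ℝ (Fin d) → Set (EuclideanSpace ℝ (Fin d)))
    (V : EuclideanSpace ℝ (Fin d) → EuclideanSpace ℝ (Fin d)) (μ : ℝ)
    (x : EuclideanSpace ℝ (Fin d)) : EuclideanSpace ℝ (Fin d) :=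
  V x - metricProj (ψ x) (V x - μ • x)

theorem IsIQVISolution.metricProj_sub_smul_eq (hxs : IsIQVISolution ψ V xs)
    (hΓ₁ : (ψ xs).Nonempty ∧ IsClosed (ψ xs) ∧ Convex ℝ (ψ xs)) (hμ : 0 ≤ μ) :
    metricProj (ψ xs) (V xs - μ • xs) = V xs := by
  refine metricProj_eq_of_forall_inner_le_zero hΓ₁.1 hΓ₁.2.1 hΓ₁.2.2 hxs.1 fun z hz => ?_
  rw [sub_sub_cancel_left, inner_neg_left, real_inner_smul_left, neg_nonpos]
  exact mul_nonneg hμ (hxs.2 z hz)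

theorem norm_metricProj_sub_solution_le (hxs : IsIQVISolution ψ V xs)
    (hΓ₁ : ∀ x, (ψ x).Nonempty ∧ IsClosed (ψ x) ∧ Convex ℝ (ψ x)) (hμ : 0 ≤ μ)
    (hproj : ∀ y r s, ‖metricProj (ψ r) y - metricProj (ψ s) y‖ ≤ ρ * ‖r - s‖) :
    ‖metricProj (ψ x) (V x - μ • x) - V xs‖ ≤ ‖(V x - V xs) - μ • (x - xs)‖ + ρ * ‖x - xs‖ := by
  obtain ⟨hne, hcl, hconv⟩ := hΓ₁ x
  calc ‖metricProj (ψ x) (V x - μ • x) - V xs‖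
      = ‖(metricProj (ψ x) (V x - μ • x) - metricProj (ψ x) (V xs - μ • xs))
          + (metricProj (ψ x) (V xs - μ • xs) - metricProj (ψ xs) (V xs - μ • xs))‖ := by
        rw [hxs.metricProj_sub_smul_eq (hΓ₁ xs) hμ, sub_add_sub_cancel]
    _ ≤ ‖(V x - μ • x) - (V xs - μ • xs)‖ + ρ * ‖x - xs‖ :=
        (norm_add_le _ _).trans
          (add_le_add (norm_metricProj_sub_metricProj_le hne hcl hconv _ _) (hproj _ _ _))
    _ = ‖(V x - V xs) - μ • (x - xs)‖ + ρ * ‖x - xs‖ := by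
        congr 2
        module

theorem inner_iqviResidual_ge (hxs : IsIQVISolution ψ V xs)
    (hΓ₁ : ∀ x, (ψ x).Nonempty ∧ IsClosed (ψ x) ∧ Convex ℝ (ψ x))
    (hL : ∀ y z, ‖V y - V z‖ ≤ L * ‖y - z‖) (hη : ∀ y z, η * ‖y - z‖ ^ 2 ≤ ⟪V y - V z, y - z⟫)
    (hμ : 0 ≤ μ) (hproj : ∀ y r s, ‖metricProj (ψ r) y - metricProj (ψ s) y‖ ≤ ρ * ‖r - s‖) :
    (η - ρ - 1/2 - L^2/2 - μ^2/2 + μ*η) * ‖x - xs‖ ^ 2 ≤ ⟪iqviResidual ψ V μ x, x - xs⟫ := by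
  set D := (V x - V xs) - μ • (x - xs)
  have hsplit : ⟪iqviResidual ψ V μ x, x - xs⟫
      = ⟪V x - V xs, x - xs⟫ - ⟪metricProj (ψ x) (V x - μ • x) - V xs, x - xs⟫ := by
    rw [← inner_sub_left, iqviResidual, sub_sub_sub_cancel_right]
  have hP := mul_le_mul_of_nonneg_right (norm_metricProj_sub_solution_le (x := x) hxs hΓ₁ hμ hproj)
    (norm_nonneg (x - xs))
  have hD := norm_sub_smul_sq_le hμ (hL x xs) (hη x xs)
  rw [hsplit]
  nlinarith [hη x xs, real_inner_le_norm (metricProj (ψ x) (V x - μ • x) - V xs) (x - xs),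
    sq_nonneg (‖D‖ - ‖x - xs‖)]

theorem norm_iqviResidual_le (hxs : IsIQVISolution ψ V xs)
    (hΓ₁ : ∀ x, (ψ x).Nonempty ∧ IsClosed (ψ x) ∧ Convex ℝ (ψ x))
    (hL : ∀ y z, ‖V y - V z‖ ≤ L * ‖y - z‖) (hμ : 0 ≤ μ)
    (hproj : ∀ y r s, ‖metricProj (ψ r) y - metricProj (ψ s) y‖ ≤ ρ * ‖r - s‖) :
    ‖iqviResidual ψ V μ x‖ ≤ (2 * L + ρ + μ) * ‖x - xs‖ := by
  have hD : ‖(V x - V xs) - μ • (x - xs)‖ ≤ ‖V x - V xs‖ + μ * ‖x - xs‖ := by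
    simpa only [norm_smul, Real.norm_of_nonneg hμ] using norm_sub_le (V x - V xs) (μ • (x - xs))
  calc ‖iqviResidual ψ V μ x‖
      = ‖(V x - V xs) - (metricProj (ψ x) (V x - μ • x) - V xs)‖ := by
        rw [iqviResidual, sub_sub_sub_cancel_right]
    _ ≤ ‖V x - V xs‖ + ‖metricProj (ψ x) (V x - μ • x) - V xs‖ := norm_sub_le _ _
    _ ≤ (2 * L + ρ + μ) * ‖x - xs‖ := by
        linarith [norm_metricProj_sub_solution_le (x := x) hxs hΓ₁ hμ hproj, hL x xs]

end Residual

theorem stmt_18_general {d : ℕ} (ψ : EuclideanSpace ℝ (Fin d) → Set (EuclideanSpace ℝ (Fin d)))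
    (V : EuclideanSpace ℝ (Fin d) → EuclideanSpace ℝ (Fin d)) (L η μ ρ θ θ₁ : ℝ)
    (hΓ₁ : ∀ x, (ψ x).Nonempty ∧ IsClosed (ψ x) ∧ Convex ℝ (ψ x))
    (hL : ∀ y z, ‖V y - V z‖ ≤ L * ‖y - z‖)
    (hη : ∀ y z, η * ‖y - z‖ ^ 2 ≤ ⟪V y - V z, y - z⟫)
    (hμ : 0 < μ)
    (hproj : ∀ y r s, ‖metricProj (ψ r) y - metricProj (ψ s) y‖ ≤ ρ * ‖r - s‖)
    (hθ : θ = η - ρ - 1/2 - L^2/2 - μ^2/2 + μ*η) (hθpos : 0 < θ)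
    (hθ₁ : θ₁ = θ / (2*L + ρ + μ)^2)
    (σ τ : ℝ → ℝ) (hσpos : ∀ t, 0 ≤ t → 0 < σ t) (hτpos : ∀ t, 0 ≤ t → 0 < τ t)
    (xs : EuclideanSpace ℝ (Fin d))
    (hxs : V xs ∈ ψ xs ∧ ∀ z ∈ ψ xs, 0 ≤ ⟪xs, z - V xs⟫)
    (x x' x'' : ℝ → EuclideanSpace ℝ (Fin d))
    (hx' : ∀ t, 0 ≤ t → HasDerivAt x (x' t) t)
    (hx'' : ∀ t, 0 ≤ t → HasDerivAt x' (x'' t) t)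
    (hode : ∀ t, 0 ≤ t →
      x'' t + σ t • x' t +
        τ t • (V (x t) - metricProj (ψ (x t)) (V (x t) - μ • x t)) = 0)
    (k k' k'' w' : ℝ → ℝ)
    (hk : ∀ t, k t = (1/2) * ‖x t - xs‖ ^ 2)
    (hk' : ∀ t, 0 ≤ t → HasDerivAt k (k' t) t)
    (hk'' : ∀ t, 0 ≤ t → HasDerivAt k' (k'' t) t)
    (hw' : ∀ t, 0 ≤ t → HasDerivAt (fun s => ‖x' s‖ ^ 2) (w' t) t) :
    ∀ t, 0 ≤ t →
      k'' t + σ t * k' t + θ^2 * θ₁ * τ t * k t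
        + (θ₁ * (σ t)^2 / (2 * τ t) - 1) * ‖x' t‖ ^ 2
        + (θ₁ * σ t / (2 * τ t)) * w' t ≤ 0 := by
  intro t ht
  have hFe : θ * ‖x t - xs‖ ^ 2 ≤ ⟪iqviResidual ψ V μ (x t), x t - xs⟫ :=
    hθ ▸ inner_iqviResidual_ge hxs hΓ₁ hL hη hμ.le hproj
  have hF : θ₁ * ‖iqviResidual ψ V μ (x t)‖ ^ 2 ≤ θ * ‖x t - xs‖ ^ 2 :=
    hθ₁ ▸ div_sq_mul_sq_le hθpos.le (norm_nonneg _) (norm_iqviResidual_le hxs hΓ₁ hL hμ.le hproj)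
  rw [hk t, deriv_half_norm_sub_sq_eq hk (hx' t ht) (hk' t ht),
    second_deriv_half_norm_sub_sq_eq hk hx' hk' (hx'' t ht) (hk'' t ht) ht,
    (hw' t ht).unique (hx'' t ht).norm_sq]
  exact lyapunov_bound (hode t ht) (hσpos t ht).le (hτpos t ht) hθpos.le
    (hθ₁ ▸ by positivity) hFe hF

/-- Along a twice differentiable trajectory of the second-order dynamical
system, the function `k(t) = ½‖x(t) − x*‖²` satisfies, for all `t ≥ 0`,
`k̈ + σ(t) k̇ + θ²θ₁ τ(t) k + (θ₁σ(t)²/(2τ(t)) − 1)‖ẋ‖² + (θ₁σ(t)/(2τ(t))) (d/dt)‖ẋ‖² ≤ 0`.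
Here `x'` and `x''` are the first and second derivatives of `x`, `k' t` and `k'' t` are the
first and second derivatives of `k` and `w' t` is the derivative of `t ↦ ‖ẋ(t)‖²`. -/
theorem stmt_18 {d : ℕ} (ψ : EuclideanSpace ℝ (Fin d) → Set (EuclideanSpace ℝ (Fin d)))
    (V : EuclideanSpace ℝ (Fin d) → EuclideanSpace ℝ (Fin d)) (L η μ ρ θ θ₁ : ℝ)
    (hΓ₁ : ∀ x, (ψ x).Nonempty ∧ IsClosed (ψ x) ∧ Convex ℝ (ψ x))
    (hL : ∀ y z, ‖V y - V z‖ ≤ L * ‖y - z‖)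
    (hη : ∀ y z, η * ‖y - z‖ ^ 2 ≤ ⟪V y - V z, y - z⟫)
    (hμ : 0 < μ) (hρ : 0 < ρ)
    (hproj : ∀ y r s, ‖metricProj (ψ r) y - metricProj (ψ s) y‖ ≤ ρ * ‖r - s‖)
    (hθ : θ = η - ρ - 1/2 - L^2/2 - μ^2/2 + μ*η) (hθpos : 0 < θ)
    (hcond : Real.sqrt (L^2 - 2*η*μ + μ^2) + ρ < μ)
    (hθ₁ : θ₁ = θ / (2*L + ρ + μ)^2)
    (σ τ : ℝ → ℝ) (hσpos : ∀ t, 0 ≤ t → 0 < σ t) (hτpos : ∀ t, 0 ≤ t → 0 < τ t)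
    (xs : EuclideanSpace ℝ (Fin d))
    (hxs : V xs ∈ ψ xs ∧ ∀ z ∈ ψ xs, 0 ≤ ⟪xs, z - V xs⟫)
    (x x' x'' : ℝ → EuclideanSpace ℝ (Fin d))
    (hx' : ∀ t, 0 ≤ t → HasDerivAt x (x' t) t)
    (hx'' : ∀ t, 0 ≤ t → HasDerivAt x' (x'' t) t)
    (hode : ∀ t, 0 ≤ t →
      x'' t + σ t • x' t +
        τ t • (V (x t) - metricProj (ψ (x t)) (V (x t) - μ • x t)) = 0)
    (k k' k'' w' : ℝ → ℝ)
    (hk : ∀ t, k t = (1/2) * ‖x t - xs‖ ^ 2)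
    (hk' : ∀ t, 0 ≤ t → HasDerivAt k (k' t) t)
    (hk'' : ∀ t, 0 ≤ t → HasDerivAt k' (k'' t) t)
    (hw' : ∀ t, 0 ≤ t → HasDerivAt (fun s => ‖x' s‖ ^ 2) (w' t) t) :
    ∀ t, 0 ≤ t →
      k'' t + σ t * k' t + θ^2 * θ₁ * τ t * k t
        + (θ₁ * (σ t)^2 / (2 * τ t) - 1) * ‖x' t‖ ^ 2
        + (θ₁ * σ t / (2 * τ t)) * w' t ≤ 0 :=
  stmt_18_general ψ V L η μ ρ θ θ₁ hΓ₁ hL hη hμ hproj hθ hθpos hθ₁ σ τ hσpos hτpos xs hxs x x' x''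
    hx' hx'' hode k k' k'' w' hk hk' hk'' hw'
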